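/- arXiv:2308.14433 — 4 statements merged into one kernel-verified Lean document; each statement's English description precedes it below -/
import Mathlib

section
/- Let R be a principal ideal domain with char(R) ≠ 2, K its field of fractions, and (W, q_W) a finite-dimensional non-degenerate quadratic space over K with an orthogonal direct sum decomposition W = W₁ ⊕ W₂ (W₁ ⊥ W₂), with orthogonal projections π_i : W → W_i. If Λ ⊆ W is a self-dual R-lattice (i.e. Λ = Λ^# where Λ^# = {w ∈ W : b_W(w, Λ) ⊆ R}) and Λ_i = Λ ∩ W_i, then Λ_i = π_i(Λ)^# for i = 1, 2. -/
/-- For a self-dual lattice Λ over a PID R in a non-degenerate quadratic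
space (W, q) over the fraction field K with orthogonal decomposition W = W₁ ⊕ W₂,
the intersections Λᵢ = Λ ∩ Wᵢ are the duals (inside Wᵢ) of the projections πᵢ(Λ). -/
theorem stmt_0
    {R K W : Type*} [CommRing R] [IsDomain R] [IsPrincipalIdealRing R]
    (hchar : (2 : R) ≠ 0)
    [Field K] [Algebra R K] [IsFractionRing R K]
    [AddCommGroup W] [Module K W] [FiniteDimensional K W]
    [Module R W] [IsScalarTower R K W]
    (Q : QuadraticForm K W)
    (hnd : ∀ w : W, (∀ x : W, QuadraticMap.polar (⇑Q) w x = 0) → w = 0)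
    (W₁ W₂ : Submodule K W) (hc : IsCompl W₁ W₂)
    (horth : ∀ x ∈ W₁, ∀ y ∈ W₂, QuadraticMap.polar (⇑Q) x y = 0)
    (Λ : Submodule R W) (hfg : Λ.FG)
    (hrank : Submodule.span K (Λ : Set W) = ⊤)
    (hself : (Λ : Set W) =
      {w : W | ∀ l ∈ Λ, QuadraticMap.polar (⇑Q) w l ∈ Set.range (algebraMap R K)}) :
    ((Λ : Set W) ∩ W₁ =
      {w : W | w ∈ W₁ ∧ ∀ l ∈ Λ,
        QuadraticMap.polar (⇑Q) w (W₁.subtype (Submodule.linearProjOfIsCompl W₁ W₂ hc l))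
          ∈ Set.range (algebraMap R K)}) ∧
    ((Λ : Set W) ∩ W₂ =
      {w : W | w ∈ W₂ ∧ ∀ l ∈ Λ,
        QuadraticMap.polar (⇑Q) w (W₂.subtype (Submodule.linearProjOfIsCompl W₂ W₁ hc.symm l))
          ∈ Set.range (algebraMap R K)}) := by
  have hmem : ∀ w : W, w ∈ Λ ↔ ∀ l ∈ Λ,
      QuadraticMap.polar (⇑Q) w l ∈ Set.range (algebraMap R K) := by
    intro w
    constructor
    · intro hw
      have : w ∈ (Λ : Set W) := hw
      rw [hself] at this
      exact this
    · intro hw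
      have : w ∈ ({w : W | ∀ l ∈ Λ, QuadraticMap.polar (⇑Q) w l ∈
          Set.range (algebraMap R K)}) := hw
      rw [← hself] at this
      exact this
  have hdec : ∀ l : W,
      (W₁.subtype (Submodule.linearProjOfIsCompl W₁ W₂ hc l) : W) +
      (W₂.subtype (Submodule.linearProjOfIsCompl W₂ W₁ hc.symm l) : W) = l := fun l =>
    Submodule.projection_add_projection_eq_self hc l
  constructor
  · ext w
    simp only [Set.mem_inter_iff, SetLike.mem_coe, Set.mem_setOf_eq]
    have key : w ∈ W₁ → ∀ l : W,
        QuadraticMap.polar (⇑Q) w (W₁.subtype (Submodule.linearProjOfIsCompl W₁ W₂ hc l))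
        = QuadraticMap.polar (⇑Q) w l := by
      intro hw1 l
      conv_rhs => rw [← hdec l]
      rw [QuadraticMap.polar_add_right]
      simp only [Submodule.subtype_apply]
      rw [horth w hw1 _ (Submodule.linearProjOfIsCompl W₂ W₁ hc.symm l).2, add_zero]
    constructor
    · rintro ⟨hwΛ, hw1⟩
      exact ⟨hw1, fun l hl => (key hw1 l) ▸ ((hmem w).1 hwΛ l hl)⟩
    · rintro ⟨hw1, hw⟩
      exact ⟨(hmem w).2 fun l hl => (key hw1 l) ▸ hw l hl, hw1⟩
  · ext w
    simp only [Set.mem_inter_iff, SetLike.mem_coe, Set.mem_setOf_eq]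
    have key : w ∈ W₂ → ∀ l : W,
        QuadraticMap.polar (⇑Q) w (W₂.subtype (Submodule.linearProjOfIsCompl W₂ W₁ hc.symm l))
        = QuadraticMap.polar (⇑Q) w l := by
      intro hw2 l
      conv_rhs => rw [← hdec l]
      rw [QuadraticMap.polar_add_right, QuadraticMap.polar_comm (⇑Q) w
        (W₁.subtype (Submodule.linearProjOfIsCompl W₁ W₂ hc l))]
      simp only [Submodule.subtype_apply]
      rw [horth _ (Submodule.linearProjOfIsCompl W₁ W₂ hc l).2 w hw2, zero_add]
    constructor
    · rintro ⟨hwΛ, hw2⟩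
      exact ⟨hw2, fun l hl => (key hw2 l) ▸ ((hmem w).1 hwΛ l hl)⟩
    · rintro ⟨hw2, hw⟩
      exact ⟨(hmem w).2 fun l hl => (key hw2 l) ▸ hw l hl, hw2⟩
end

section
/- Let V be a quadratic space over ℚ with associated bilinear form ⟨·,·⟩, and let w₋, w₊ ∈ V be isotropic vectors with ⟨w₋, w₊⟩ = −1 spanning a plane Π. Suppose the orthogonal complement Π^⊥ is positive definite. Fix a rational number d > 0 and a ℤ-lattice L₀ in V. Then there are only finitely many vectors v ∈ L₀ satisfying q(v) = d and such that ⟨v, w₋⟩ and ⟨v, w₊⟩ are both non-zero with opposite signs. -/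
/-!
On `L₀` the pairings `f = ⟨·, w₋⟩` and `g = ⟨·, w₊⟩` take values in `(1/N)ℤ` for some `N`, so
they are at least `1/N` in absolute value wherever they are non-zero. Projecting `v` onto `Π^⊥`
gives `q(v) + f(v) g(v) = q(v_⊥) ≥ 0`, so `|f(v) g(v)| ≤ d` when `f(v) g(v) < 0`, and therefore
`|f(v)|, |g(v)| ≤ d N`. Hence the positive definite form `q + (f + g)²` is bounded on the vectors
in question, and a positive definite rational form takes values below a given bound at only
finitely many points of a lattice: diagonalise it, and note that the coordinates have bounded
denominators on the lattice.
-/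

open QuadraticMap

theorem Submodule.FG.exists_mul_natCast_eq_intCast {V F : Type*} [AddCommGroup V]
    [FunLike F V ℚ] [AddMonoidHomClass F V ℚ] {L : Submodule ℤ V} (hL : L.FG) (φ : F) :
    ∃ N : ℕ, 0 < N ∧ ∀ v ∈ L, ∃ n : ℤ, φ v * N = n := by
  obtain ⟨s, rfl⟩ := hL
  refine ⟨∏ x ∈ s, (φ x).den, Finset.prod_pos fun x _ => (φ x).pos, fun v hv => ?_⟩
  induction hv using Submodule.span_induction with
  | mem x hx =>
    obtain ⟨k, hk⟩ := Finset.dvd_prod_of_mem (fun x => (φ x).den) hx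
    exact ⟨(φ x).num * k, by rw [hk]; push_cast; rw [← mul_assoc, Rat.mul_den_eq_num]⟩
  | zero => exact ⟨0, by simp⟩
  | add x y _ _ hx hy =>
    obtain ⟨n, hn⟩ := hx
    obtain ⟨m, hm⟩ := hy
    exact ⟨n + m, by rw [map_add, add_mul, hn, hm, Int.cast_add]⟩
  | smul a x _ hx =>
    obtain ⟨n, hn⟩ := hx
    exact ⟨a * n, by rw [map_zsmul, zsmul_eq_mul, mul_assoc, hn, Int.cast_mul]⟩

theorem one_le_abs_mul_natCast_of_ne_zero {x : ℚ} {N : ℕ} {n : ℤ} (hN : 0 < N)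
    (h : x * N = n) (hx : x ≠ 0) : 1 ≤ |x| * N := by
  have hn : n ≠ 0 := by rintro rfl; simp_all
  calc (1 : ℚ) ≤ |(n : ℚ)| := by exact_mod_cast Int.one_le_abs hn
    _ = |x| * N := by rw [← h, abs_mul, Nat.abs_cast]

theorem finite_setOf_mul_natCast_eq_intCast_sq_le {N : ℕ} (hN : 0 < N) (C : ℚ) :
    {x : ℚ | (∃ n : ℤ, x * N = n) ∧ x ^ 2 ≤ C}.Finite := by
  set M : ℤ := ⌈C * N ^ 2⌉
  refine ((Set.finite_Icc (-M) M).image fun n : ℤ => (n : ℚ) / N).subset ?_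
  rintro x ⟨⟨n, hn⟩, hx⟩
  refine ⟨n, ?_, show (n : ℚ) / N = x by rw [← hn, mul_div_cancel_right₀ _ (by positivity)]⟩
  have hn2 : (n : ℚ) ^ 2 ≤ M := calc
    (n : ℚ) ^ 2 = x ^ 2 * N ^ 2 := by rw [← hn, mul_pow]
    _ ≤ C * N ^ 2 := by gcongr
    _ ≤ M := Int.le_ceil _
  have : |n| ≤ M := by
    rw [Int.abs_eq_natAbs]
    exact (Int.natAbs_le_self_sq n).trans (by exact_mod_cast hn2)
  exact abs_le.mp this

theorem QuadraticMap.PosDef.finite_setOf_mem_le {V : Type*} [AddCommGroup V] [Module ℚ V]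
    [FiniteDimensional ℚ V] {Q : QuadraticForm ℚ V} (hQ : Q.PosDef)
    {L : Submodule ℤ V} (hL : L.FG) (C : ℚ) : {v | v ∈ L ∧ Q v ≤ C}.Finite := by
  let : Invertible (2 : ℚ) := invertibleOfNonzero two_ne_zero
  obtain ⟨e, he⟩ :=
    LinearMap.BilinForm.exists_orthogonal_basis (B := associated Q) ⟨associated_isSymm ℚ Q⟩
  have hQe (v : V) : Q v = ∑ i, Q (e i) * e.equivFun v i ^ 2 := by
    simpa [basisRepr_apply, e.sum_equivFun, ← pow_two] using
      (DFunLike.congr_fun (basisRepr_eq_of_iIsOrtho Q e he) (e.equivFun v))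
  choose N hN hNL using fun i => hL.exists_mul_natCast_eq_intCast (e.coord i)
  refine ((Set.Finite.pi fun i => finite_setOf_mul_natCast_eq_intCast_sq_le (hN i)
    (C / Q (e i))).preimage e.equivFun.injective.injOn).subset ?_
  rintro v ⟨hvL, hvC⟩ i -
  refine ⟨hNL i v hvL, ?_⟩
  have hterm : Q (e i) * e.equivFun v i ^ 2 ≤ Q v := hQe v ▸
    Finset.single_le_sum (fun j _ => mul_nonneg (hQ _ (e.ne_zero j)).le (sq_nonneg _))
      (Finset.mem_univ i)
  rw [le_div_iff₀' (hQ _ (e.ne_zero i))]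
  exact hterm.trans hvC

section HyperbolicPlane

variable {R M : Type*} [CommRing R] [AddCommGroup M] [Module R M] (Q : QuadraticForm R M)
  {wm wp : M}

/-- The projection of `v` onto the orthogonal complement of `span {wm, wp}` when
`polar Q wm wp = -1` and `wm`, `wp` are isotropic. -/
def hyperbolicPerp (wm wp v : M) : M := v + polar Q v wp • wm + polar Q v wm • wp

variable {Q}

theorem polar_hyperbolicPerp_left (hm : Q wm = 0) (hpair : polar Q wm wp = -1) (v : M) :
    polar Q (hyperbolicPerp Q wm wp v) wm = 0 := by
  simp [hyperbolicPerp, polar_add_left, polar_smul_left, polar_comm Q wp wm, hpair, hm]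

theorem polar_hyperbolicPerp_right (hp : Q wp = 0) (hpair : polar Q wm wp = -1) (v : M) :
    polar Q (hyperbolicPerp Q wm wp v) wp = 0 := by
  simp [hyperbolicPerp, polar_add_left, polar_smul_left, hpair, hp]

theorem apply_hyperbolicPerp (hm : Q wm = 0) (hp : Q wp = 0) (hpair : polar Q wm wp = -1)
    (v : M) : Q (hyperbolicPerp Q wm wp v) = Q v + polar Q v wm * polar Q v wp := by
  simp only [hyperbolicPerp, QuadraticMap.map_add Q, QuadraticMap.map_smul, polar_add_left,
    polar_smul_left, polar_smul_right, hm, hp, hpair, smul_eq_mul]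
  ring

theorem add_polar_mul_polar_nonneg [PartialOrder R] (hm : Q wm = 0) (hp : Q wp = 0)
    (hpair : polar Q wm wp = -1)
    (hperp : ∀ v, polar Q v wm = 0 → polar Q v wp = 0 → v ≠ 0 → 0 < Q v) (v : M) :
    0 ≤ Q v + polar Q v wm * polar Q v wp := by
  rw [← apply_hyperbolicPerp hm hp hpair]
  by_cases h : hyperbolicPerp Q wm wp v = 0
  · simp [h]
  · exact (hperp _ (polar_hyperbolicPerp_left hm hpair v)
      (polar_hyperbolicPerp_right hp hpair v) h).le

/-- On the plane the form `Q` is `-f g` (with `f = polar Q · wm`, `g = polar Q · wp`), so adding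
`(f + g)²` turns it into the positive definite `f² + f g + g²`. -/
theorem posDef_add_linMulLin_polar [LinearOrder R] [IsStrictOrderedRing R] (hm : Q wm = 0)
    (hp : Q wp = 0) (hpair : polar Q wm wp = -1)
    (hperp : ∀ v, polar Q v wm = 0 → polar Q v wp = 0 → v ≠ 0 → 0 < Q v) :
    (Q + linMulLin (Q.polarBilin.flip wm + Q.polarBilin.flip wp)
      (Q.polarBilin.flip wm + Q.polarBilin.flip wp)).PosDef := by
  intro v hv
  have hQ := add_polar_mul_polar_nonneg hm hp hpair hperp v
  simp only [add_apply, linMulLin_apply, LinearMap.add_apply, LinearMap.flip_apply,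
    polarBilin_apply_apply]
  by_cases h : polar Q v wm = 0 ∧ polar Q v wp = 0
  · rw [h.1, h.2, add_zero, mul_zero, add_zero]
    exact hperp v h.1 h.2 hv
  · have : 0 < polar Q v wm ^ 2 + polar Q v wp ^ 2 := by
      rw [not_and_or] at h
      rcases h with h | h <;> positivity
    nlinarith [sq_nonneg (polar Q v wm + polar Q v wp)]

end HyperbolicPlane

theorem abs_le_mul_of_abs_mul_le {R : Type*} [CommRing R] [LinearOrder R] [IsStrictOrderedRing R]
    {x y d c : R} (h : |x * y| ≤ d) (hy : 1 ≤ |y| * c) : |x| ≤ d * c := by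
  have hc : 0 ≤ c := by nlinarith [abs_nonneg y]
  calc |x| ≤ |x| * (|y| * c) := le_mul_of_one_le_right (abs_nonneg x) hy
    _ = |x * y| * c := by rw [abs_mul, mul_assoc]
    _ ≤ d * c := mul_le_mul_of_nonneg_right h hc

theorem stmt_5_general {V : Type*} [AddCommGroup V] [Module ℚ V] [FiniteDimensional ℚ V]
    (Q : QuadraticForm ℚ V)
    (wm wp : V) (hm : Q wm = 0) (hp : Q wp = 0)
    (hpair : QuadraticMap.polar (⇑Q) wm wp = -1)
    (hposdef : ∀ v : V, QuadraticMap.polar (⇑Q) v wm = 0 →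
      QuadraticMap.polar (⇑Q) v wp = 0 → v ≠ 0 → 0 < Q v)
    (d : ℚ)
    (L₀ : Submodule ℤ V) (hfg : L₀.FG) :
    {v : V | v ∈ L₀ ∧ Q v = d ∧
      QuadraticMap.polar (⇑Q) v wm ≠ 0 ∧ QuadraticMap.polar (⇑Q) v wp ≠ 0 ∧
      QuadraticMap.polar (⇑Q) v wm * QuadraticMap.polar (⇑Q) v wp < 0}.Finite := by
  obtain ⟨Nm, hNm, hmL⟩ := hfg.exists_mul_natCast_eq_intCast (Q.polarBilin.flip wm)
  obtain ⟨Np, hNp, hpL⟩ := hfg.exists_mul_natCast_eq_intCast (Q.polarBilin.flip wp)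
  refine ((posDef_add_linMulLin_polar hm hp hpair hposdef).finite_setOf_mem_le hfg
    (d + (d * Np + d * Nm) ^ 2)).subset ?_
  rintro v ⟨hvL, hvd, hvm, hvp, hneg⟩
  have hprod : |polar Q v wm * polar Q v wp| ≤ d := by
    have := add_polar_mul_polar_nonneg hm hp hpair hposdef v
    rw [abs_of_neg hneg]
    linarith
  obtain ⟨a, ha⟩ := hmL v hvL
  obtain ⟨b, hb⟩ := hpL v hvL
  simp only [LinearMap.flip_apply, polarBilin_apply_apply] at ha hb
  have hbm : |polar Q v wm| ≤ d * Np := abs_le_mul_of_abs_mul_le hprod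
    (one_le_abs_mul_natCast_of_ne_zero hNp hb hvp)
  have hbp : |polar Q v wp| ≤ d * Nm :=
    abs_le_mul_of_abs_mul_le (mul_comm (polar Q v wm) _ ▸ hprod)
      (one_le_abs_mul_natCast_of_ne_zero hNm ha hvm)
  have hsum : |polar Q v wm + polar Q v wp| ≤ d * Np + d * Nm :=
    (abs_add_le _ _).trans (add_le_add hbm hbp)
  refine ⟨hvL, ?_⟩
  simp only [add_apply, linMulLin_apply, LinearMap.add_apply, LinearMap.flip_apply,
    polarBilin_apply_apply, hvd, ← abs_mul_abs_self (polar Q v wm + polar Q v wp), ← pow_two]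
  gcongr

/-- Finiteness of lattice vectors of fixed positive length whose pairings
with the two isotropic vectors w₋, w₊ (spanning a hyperbolic plane with positive
definite orthogonal complement) are non-zero of opposite signs. -/
theorem stmt_5 {V : Type*} [AddCommGroup V] [Module ℚ V] [FiniteDimensional ℚ V]
    (Q : QuadraticForm ℚ V)
    (wm wp : V) (hm : Q wm = 0) (hp : Q wp = 0)
    (hpair : QuadraticMap.polar (⇑Q) wm wp = -1)
    (hposdef : ∀ v : V, QuadraticMap.polar (⇑Q) v wm = 0 →
      QuadraticMap.polar (⇑Q) v wp = 0 → v ≠ 0 → 0 < Q v)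
    (d : ℚ) (hd : 0 < d)
    (L₀ : Submodule ℤ V) (hfg : L₀.FG)
    (hfull : Submodule.span ℚ (L₀ : Set V) = ⊤) :
    {v : V | v ∈ L₀ ∧ Q v = d ∧
      QuadraticMap.polar (⇑Q) v wm ≠ 0 ∧ QuadraticMap.polar (⇑Q) v wp ≠ 0 ∧
      QuadraticMap.polar (⇑Q) v wm * QuadraticMap.polar (⇑Q) v wp < 0}.Finite :=
  stmt_5_general Q wm wp hm hp hpair hposdef d L₀ hfg
end

section
/- Let k be a field of characteristic ≠ 2, l/k a finite étale algebra, and (W, q_l) a non-degenerate quadratic space over l. Then W with q_k := Tr^l_k ∘ q_l is a non-degenerate quadratic space over k, there is a canonical embedding SO(q_l) ⊆ SO(q_k), and the spinor norm maps satisfy sn_{q_k}(g) = N^l_k(sn_{q_l}(g)) in k^×/(k^×)² for all g ∈ SO(q_l). -/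
/-- Reflection in a vector `v` whose length `q v` is a unit, for a quadratic form `q`
with values in the commutative ring `A`. -/
noncomputable def reflFun8 (A : Type*) {W : Type*} [CommRing A] [AddCommGroup W]
    [Module A W] (q : W → A) (v : W) (x : W) : W :=
  x - (Ring.inverse (q v) * QuadraticMap.polar q x v) • v

/-- `g` is a product of an even number of reflections in vectors of unit length
`q (v i)`, with `s` the product of these lengths; i.e. `s` is a representative of the
spinor norm of `g` with respect to `q`. -/
noncomputable def IsSpinorNormRep (A : Type*) {W : Type*} [CommRing A] [AddCommGroup W]
    [Module A W] (q : W → A) (g : W → W) (s : A) : Prop :=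
  ∃ (m : ℕ) (v : Fin (2 * m) → W), (∀ i, IsUnit (q (v i))) ∧
    g = (List.ofFn fun i => reflFun8 A q (v i)).foldr (· ∘ ·) id ∧
    s = ∏ i, q (v i)

/-!
Let `v ∈ W` with `c = q_l(v)` a unit, and choose a `k`-basis `a_1, …, a_d` of `l` orthogonal
for the symmetric `k`-bilinear form `(x, y) ↦ Tr(c x y)`, which is nondegenerate because the
trace form is. The vectors `a_i v` are pairwise `q_k`-orthogonal with `q_k(a_i v) = Tr(c a_i²)`,
nonzero, and the product of the `k`-reflections in them is `-1` on `l v = ∑ k a_i v` and `1` on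
the `q_l`-orthogonal complement of `v`. As `2` is invertible these two pieces span `W`, so the
product is the `l`-reflection in `v`. Comparing the Gram determinants of `Tr(c x y)` in the basis
`a` and in a fixed basis `b` gives `∏ Tr(c a_i²) = N(c) · disc(b) · det(b → a)²`. A spinor norm
representative `s` over `l` is a product of an even number `2m` of such `c`, so over `k` one gets
`N(s) · (disc(b)^m ∏ det)²`.
-/

theorem LinearMap.BilinForm.prod_apply_self_eq_det_mul_sq {K V ι : Type*} [CommRing K]
    [AddCommGroup V] [Module K V] [Fintype ι] [DecidableEq ι] {B : LinearMap.BilinForm K V}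
    {a : Module.Basis ι K V} (ha : B.IsOrthoᵢ a) (b : Module.Basis ι K V) :
    ∏ i, B (a i) (a i) = (B.toMatrix b).det * b.det a ^ 2 := by
  have hdiag : B.toMatrix a = Matrix.diagonal fun i => B (a i) (a i) := by
    ext i j
    rcases eq_or_ne i j with rfl | hij
    · simp
    · rw [LinearMap.BilinForm.toMatrix_apply, Matrix.diagonal_apply_ne _ hij]
      exact ha hij
  rw [← Matrix.det_diagonal, ← hdiag, ← LinearMap.BilinForm.toMatrix_mul_basis_toMatrix b a,
    Matrix.det_mul, Matrix.det_mul, Matrix.det_transpose, Module.Basis.det_apply]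
  ring

namespace Algebra

open Module

variable {k l : Type*} [Field k] [CommRing l] [Algebra k l]

theorem discr_ne_zero_of_nondegenerate {ι : Type*} [Fintype ι] [DecidableEq ι]
    (hTr : (traceForm k l).Nondegenerate) (b : Basis ι k l) : discr k b ≠ 0 := by
  rw [discr_def, traceMatrix_of_basis]
  exact (LinearMap.BilinForm.nondegenerate_iff_det_ne_zero b).1 hTr

theorem det_toMatrix_traceForm_compLeft_mulLeft {ι : Type*} [Fintype ι] [DecidableEq ι]
    (b : Basis ι k l) (c : l) :
    (((traceForm k l).compLeft (LinearMap.mulLeft k c)).toMatrix b).det =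
      norm k c * discr k b := by
  rw [LinearMap.BilinForm.toMatrix_compLeft, Matrix.det_mul, Matrix.det_transpose,
    toMatrix_lmul_eq, ← norm_eq_matrix_det, discr_def, traceMatrix_of_basis]

theorem exists_basis_trace_mul_isOrtho [Module.Finite k l] (h2 : (2 : k) ≠ 0)
    (hTr : (traceForm k l).Nondegenerate) {c : l} (hc : IsUnit c) :
    ∃ a : Basis (Fin (finrank k l)) k l, (∀ i j, i ≠ j → trace k l (c * a i * a j) = 0) ∧
      (∀ i, trace k l (c * a i * a i) ≠ 0) ∧
      ∃ P : k, P ≠ 0 ∧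
        ∏ i, trace k l (c * a i * a i) = norm k c * discr k (finBasis k l) * P ^ 2 := by
  set B := (traceForm k l).compLeft (LinearMap.mulLeft k c)
  have hB : ∀ x y, B x y = trace k l (c * x * y) := fun x y => by simp [B]
  have hBnd : B.Nondegenerate := by
    rw [LinearMap.BilinForm.nondegenerate_iff_det_ne_zero (finBasis k l),
      det_toMatrix_traceForm_compLeft_mulLeft]
    exact mul_ne_zero (hc.map (norm k)).ne_zero (discr_ne_zero_of_nondegenerate hTr _)
  have : Invertible (2 : k) := invertibleOfNonzero h2
  obtain ⟨a, ha⟩ := LinearMap.BilinForm.exists_orthogonal_basis (B := B) (by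
    refine LinearMap.isSymm_def.2 fun x y => ?_
    rw [RingHom.id_apply, hB, hB, mul_right_comm])
  refine ⟨a, fun i j hij => hB _ _ ▸ ha hij, fun i => hB _ _ ▸
    ha.not_isOrtho_basis_self_of_separatingLeft hBnd.1 i, (finBasis k l).det a,
    ((finBasis k l).isUnit_det a).ne_zero, ?_⟩
  simp only [← hB]
  rw [LinearMap.BilinForm.prod_apply_self_eq_det_mul_sq ha (finBasis k l),
    det_toMatrix_traceForm_compLeft_mulLeft]

end Algebra

namespace QuadraticMap

section Reflection

variable {A W : Type*} [CommRing A] [AddCommGroup W] [Module A W] (Q : QuadraticMap A W A)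

noncomputable def reflection (v : W) : Module.End A W :=
  Module.preReflection v (Ring.inverse (Q v) • Q.polarBilin v)

theorem coe_reflection (v : W) : ⇑(Q.reflection v) = reflFun8 A Q v := by
  ext x
  simp [reflection, Module.preReflection_apply, reflFun8, polar_comm Q v x]

theorem reflection_apply_of_polar_eq_zero {v x : W} (hx : polar Q x v = 0) :
    Q.reflection v x = x := by
  rw [coe_reflection, reflFun8, hx, mul_zero, zero_smul, sub_zero]

theorem reflection_apply_self {v : W} (hv : IsUnit (Q v)) : Q.reflection v v = -v := by
  refine Module.preReflection_apply_self ?_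
  rw [LinearMap.smul_apply, polarBilin_apply_apply, polar_self, smul_eq_mul, two_smul, ← two_mul,
    mul_left_comm, Ring.inverse_mul_cancel _ hv, mul_one]

theorem apply_reflection {v : W} (hv : IsUnit (Q v)) (x : W) : Q (Q.reflection v x) = Q x := by
  have hc : Ring.inverse (Q v) * polar Q x v * Q v = polar Q x v := by
    rw [mul_comm, Ring.mul_inverse_cancel_left _ _ hv]
  rw [coe_reflection, reflFun8, sub_eq_add_neg, ← neg_smul, QuadraticMap.map_add Q,
    QuadraticMap.map_smul, polar_smul_right, smul_eq_mul, smul_eq_mul]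
  linear_combination Ring.inverse (Q v) * polar Q x v * hc

theorem eq_reflection_of_apply {f : W →+ W} {v : W} (h2 : IsUnit (2 : A)) (hv : IsUnit (Q v))
    (hfix : ∀ x, polar Q x v = 0 → f x = x) (hneg : ∀ a : A, f (a • v) = -(a • v)) :
    ⇑f = Q.reflection v := by
  ext x
  have hc : Ring.inverse (Q v) * polar Q x v * Q v = polar Q x v := by
    rw [mul_comm, Ring.mul_inverse_cancel_left _ _ hv]
  rw [coe_reflection, reflFun8]
  generalize Ring.inverse (Q v) * polar Q x v = c at hc ⊢
  have h2' : 2 * Ring.inverse (2 : A) = 1 := Ring.mul_inverse_cancel _ h2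
  have hperp : polar Q (x - (Ring.inverse 2 * c) • v) v = 0 := by
    rw [polar_sub_left, polar_smul_left, polar_self, smul_eq_mul, two_smul, ← two_mul]
    linear_combination (-2 * Ring.inverse 2) * hc - polar Q x v * h2'
  have hx : x = (x - (Ring.inverse 2 * c) • v) + (Ring.inverse 2 * c) • v :=
    (sub_add_cancel _ _).symm
  rw [hx, map_add, hfix _ hperp, hneg, ← hx]
  linear_combination (norm := module) h2' • (-c • v)

theorem coe_list_prod_map_reflection (L : List W) :
    ⇑(L.map Q.reflection).prod = (L.map (reflFun8 A Q)).foldr (· ∘ ·) id := by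
  induction L with
  | nil => rfl
  | cons v L ih => rw [List.map_cons, List.prod_cons, Module.End.coe_mul, ih, coe_reflection]; rfl

theorem apply_list_prod_map_reflection {L : List W} (hL : ∀ v ∈ L, IsUnit (Q v)) (x : W) :
    Q ((L.map Q.reflection).prod x) = Q x := by
  induction L with
  | nil => rfl
  | cons v L ih =>
    simp only [List.forall_mem_cons] at hL
    rw [List.map_cons, List.prod_cons, Module.End.mul_apply, apply_reflection Q hL.1, ih hL.2]

theorem list_prod_map_reflection_apply_of_polar_eq_zero {L : List W} {x : W}
    (hx : ∀ e ∈ L, polar Q x e = 0) : (L.map Q.reflection).prod x = x := by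
  induction L with
  | nil => rfl
  | cons v L ih =>
    simp only [List.forall_mem_cons] at hx
    rw [List.map_cons, List.prod_cons, Module.End.mul_apply, ih hx.2,
      reflection_apply_of_polar_eq_zero Q hx.1]

theorem list_prod_map_reflection_apply_of_mem_span {L : List W}
    (hL : L.Pairwise fun e e' => polar Q e e' = 0) (hunit : ∀ e ∈ L, IsUnit (Q e)) {x : W}
    (hx : x ∈ Submodule.span A {e | e ∈ L}) : (L.map Q.reflection).prod x = -x := by
  suffices h : ∀ e ∈ L, (L.map Q.reflection).prod e = -e by
    have : Submodule.span A {e | e ∈ L} ≤ LinearMap.ker ((L.map Q.reflection).prod + 1) :=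
      Submodule.span_le.2 fun e he => by simp [h e he]
    simpa [add_eq_zero_iff_eq_neg] using this hx
  clear hx
  induction L with
  | nil => simp
  | cons v L ih =>
    rw [List.pairwise_cons] at hL
    simp only [List.forall_mem_cons] at hunit
    intro e he
    rw [List.map_cons, List.prod_cons, Module.End.mul_apply]
    by_cases heL : e ∈ L
    · rw [ih hL.2 hunit.2 e heL, map_neg,
        reflection_apply_of_polar_eq_zero Q (by rw [polar_comm]; exact hL.1 e heL)]
    · obtain rfl : e = v := by simpa [heL] using he
      rw [list_prod_map_reflection_apply_of_polar_eq_zero Q hL.1, reflection_apply_self Q hunit.1]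

theorem isSpinorNormRep_iff_exists_list {g : W → W} {s : A} :
    IsSpinorNormRep A Q g s ↔ ∃ L : List W, Even L.length ∧ (∀ v ∈ L, IsUnit (Q v)) ∧
      g = ⇑(L.map Q.reflection).prod ∧ s = (L.map Q).prod := by
  simp only [IsSpinorNormRep, coe_list_prod_map_reflection]
  constructor
  · rintro ⟨m, v, hv, rfl, rfl⟩
    refine ⟨List.ofFn v, by simp, by simpa using hv, by rw [List.map_ofFn]; rfl, ?_⟩
    rw [List.map_ofFn, List.prod_ofFn]; rfl
  · rintro ⟨L, ⟨m, hm⟩, hL, rfl, rfl⟩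
    obtain ⟨v, rfl⟩ : ∃ v : Fin (2 * m) → W, List.ofFn v = L :=
      ⟨fun i => L[i.cast (by omega : 2 * m = L.length)], by
        rw [List.ofFn_congr (by omega : 2 * m = L.length)]; exact List.ofFn_getElem⟩
    refine ⟨m, v, by simpa using hL, by rw [List.map_ofFn]; rfl, ?_⟩
    rw [List.map_ofFn, List.prod_ofFn]; rfl

theorem _root_.IsSpinorNormRep.apply_eq {g : W → W} {s : A} (hg : IsSpinorNormRep A Q g s)
    (x : W) : Q (g x) = Q x := by
  obtain ⟨L, -, hL, rfl, -⟩ := (isSpinorNormRep_iff_exists_list Q).1 hg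
  exact apply_list_prod_map_reflection Q hL x

end Reflection

section Transfer

open Module

variable {k l W : Type*} [Field k] [CommRing l] [Algebra k l]
  [AddCommGroup W] [Module l W] [Module k W] [IsScalarTower k l W] (Q : QuadraticMap l W l)

local notation "Qₖ" => LinearMap.compQuadraticMap' (Algebra.trace k l) Q

theorem polar_trace_separatingLeft (hTr : (Algebra.traceForm k l).Nondegenerate)
    (hQ : ∀ x, (∀ y, polar Q x y = 0) → x = 0) :
    ∀ x, (∀ y, polar Qₖ x y = 0) → x = 0 := by
  refine fun x hx => hQ x fun y => hTr.1 _ fun a => ?_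
  rw [Algebra.traceForm_apply, mul_comm, ← smul_eq_mul, ← polar_smul_right,
    ← LinearMap.compQuadraticMap_polar]
  exact hx _

variable [Module.Finite k l]

theorem exists_list_trace_reflections_eq_reflection (h2 : (2 : k) ≠ 0)
    (hTr : (Algebra.traceForm k l).Nondegenerate) {v : W} (hv : IsUnit (Q v)) :
    ∃ E : List W, E.length = finrank k l ∧
      (∀ e ∈ E, IsUnit (Qₖ e)) ∧
      ⇑(E.map (reflection Qₖ)).prod = Q.reflection v ∧
      ∃ P : k, P ≠ 0 ∧ (E.map Qₖ).prod
        = Algebra.norm k (Q v) * Algebra.discr k (finBasis k l) * P ^ 2 := by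
  obtain ⟨a, hortho, hne, P, hP, hprod⟩ := Algebra.exists_basis_trace_mul_isOrtho h2 hTr hv
  have hpolar :
      ∀ i j, polar Qₖ (a i • v) (a j • v) = 2 * Algebra.trace k l (Q v * a i * a j) := by
    intro i j
    rw [LinearMap.compQuadraticMap_polar, polar_smul_left, polar_smul_right, polar_self,
      smul_eq_mul, smul_eq_mul, two_smul, mul_add, mul_add, map_add, two_mul]
    ring_nf
  have hQk : ∀ i, Qₖ (a i • v) = Algebra.trace k l (Q v * a i * a i) := by
    intro i
    simp only [LinearMap.compQuadraticMap'_apply, QuadraticMap.map_smul, smul_eq_mul]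
    ring_nf
  have h2l : IsUnit (2 : l) := by
    simpa only [map_ofNat] using (isUnit_iff_ne_zero.2 h2).map (algebraMap k l)
  have hunit : ∀ e ∈ List.ofFn fun i => a i • v, IsUnit (Qₖ e) := by
    simpa only [List.mem_ofFn, forall_exists_index, forall_apply_eq_imp_iff, hQk,
      isUnit_iff_ne_zero] using hne
  refine ⟨List.ofFn fun i => a i • v, by simp, hunit, ?_, P, hP, ?_⟩
  · refine eq_reflection_of_apply Q
      (f := ((List.ofFn fun i => a i • v).map (reflection Qₖ)).prod.toAddMonoidHom) h2l hv
      (fun x hx => list_prod_map_reflection_apply_of_polar_eq_zero Qₖ ?_) (fun c => ?_)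
    · simp only [List.mem_ofFn, forall_exists_index, forall_apply_eq_imp_iff]
      intro i
      rw [LinearMap.compQuadraticMap_polar, polar_smul_right, hx, smul_zero, map_zero]
    refine list_prod_map_reflection_apply_of_mem_span Qₖ ?_ hunit ?_
    · rw [List.pairwise_ofFn]
      intro i j hij
      rw [hpolar, hortho i j hij.ne, mul_zero]
    · rw [← a.sum_repr c, Finset.sum_smul]
      refine Submodule.sum_mem _ fun i _ => ?_
      rw [smul_assoc]
      exact Submodule.smul_mem _ _ (Submodule.subset_span (List.mem_ofFn.2 ⟨i, rfl⟩))
  · rw [List.map_ofFn, List.prod_ofFn]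
    simpa only [Function.comp_apply, hQk] using hprod

theorem exists_list_trace_reflections_eq_list_prod (h2 : (2 : k) ≠ 0)
    (hTr : (Algebra.traceForm k l).Nondegenerate) {L : List W} (hL : ∀ v ∈ L, IsUnit (Q v)) :
    ∃ E : List W, E.length = finrank k l * L.length ∧
      (∀ e ∈ E, IsUnit (Qₖ e)) ∧
      ⇑(E.map (reflection Qₖ)).prod
        = ⇑(L.map Q.reflection).prod ∧
      ∃ P : k, P ≠ 0 ∧ (E.map Qₖ).prod
        = Algebra.norm k (L.map Q).prod * Algebra.discr k (finBasis k l) ^ L.length * P ^ 2 := by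
  induction L with
  | nil => exact ⟨[], rfl, by simp, rfl, 1, one_ne_zero, by simp⟩
  | cons v L ih =>
    simp only [List.forall_mem_cons] at hL
    obtain ⟨E₁, hlen₁, hunit₁, hrefl₁, P₁, hP₁, hprod₁⟩ :=
      exists_list_trace_reflections_eq_reflection Q h2 hTr hL.1
    obtain ⟨E₂, hlen₂, hunit₂, hrefl₂, P₂, hP₂, hprod₂⟩ := ih hL.2
    refine ⟨E₁ ++ E₂, ?_, ?_, ?_, P₁ * P₂, mul_ne_zero hP₁ hP₂, ?_⟩
    · rw [List.length_append, hlen₁, hlen₂, List.length_cons]; ring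
    · simpa only [List.mem_append, or_imp, forall_and] using ⟨hunit₁, hunit₂⟩
    · rw [List.map_append, List.prod_append, Module.End.coe_mul, hrefl₁, hrefl₂, List.map_cons,
        List.prod_cons, Module.End.coe_mul]
    · rw [List.map_append, List.prod_append, hprod₁, hprod₂, List.map_cons, List.prod_cons,
        map_mul, List.length_cons]
      ring

theorem exists_isSpinorNormRep_trace (h2 : (2 : k) ≠ 0)
    (hTr : (Algebra.traceForm k l).Nondegenerate)
    {g : W → W} {s : l} (hg : IsSpinorNormRep l Q g s) :
    ∃ c : k, c ≠ 0 ∧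
      IsSpinorNormRep k Qₖ g (Algebra.norm k s * c ^ 2) := by
  obtain ⟨L, ⟨m, hm⟩, hL, rfl, rfl⟩ := (isSpinorNormRep_iff_exists_list Q).1 hg
  obtain ⟨E, hlen, hunit, hrefl, P, hP, hprod⟩ :=
    exists_list_trace_reflections_eq_list_prod Q h2 hTr hL
  refine ⟨Algebra.discr k (finBasis k l) ^ m * P,
    mul_ne_zero (pow_ne_zero _ (Algebra.discr_ne_zero_of_nondegenerate hTr _)) hP,
    (isSpinorNormRep_iff_exists_list _).2 ⟨E, ⟨finrank k l * m, ?_⟩, hunit, hrefl.symm, ?_⟩⟩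
  · rw [hlen, hm, mul_add]
  · rw [hprod, hm]; ring

end Transfer

end QuadraticMap

theorem stmt_8_general {k l W : Type*} [Field k] (hchar : (2 : k) ≠ 0)
    [CommRing l] [Algebra k l] [Module.Finite k l]
    (hetale : (Algebra.traceForm k l).Nondegenerate)
    [AddCommGroup W] [Module l W] [Module k W] [IsScalarTower k l W]
    (ql : W → l)
    (hsmul : ∀ (c : l) (x : W), ql (c • x) = c ^ 2 * ql x)
    (hbil : ∀ x : W, IsLinearMap l fun y => QuadraticMap.polar ql x y)
    (hnd : ∀ x : W, (∀ y : W, QuadraticMap.polar ql x y = 0) → x = 0)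
    (g : W → W) (s : l) (hg : IsSpinorNormRep l ql g s) :
    (∀ x : W, Algebra.trace k l (ql (g x)) = Algebra.trace k l (ql x)) ∧
    (∀ x : W,
      (∀ y : W, QuadraticMap.polar (fun z => Algebra.trace k l (ql z)) x y = 0) → x = 0) ∧
    (∃ c : k, c ≠ 0 ∧
      IsSpinorNormRep k (fun z => Algebra.trace k l (ql z)) g
        (Algebra.norm k s * c ^ 2)) := by
  let Q : QuadraticMap l W l := .ofPolar ql (fun c x => by rw [hsmul, sq, smul_eq_mul])
    (fun x x' y => by
      simp only [QuadraticMap.polar_comm ql _ y, (hbil y).map_add])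
    (fun c x y => by
      rw [QuadraticMap.polar_comm, (hbil y).map_smul, QuadraticMap.polar_comm, smul_eq_mul])
  exact ⟨fun x => congrArg _ (hg.apply_eq Q x),
    QuadraticMap.polar_trace_separatingLeft Q hetale hnd,
    QuadraticMap.exists_isSpinorNormRep_trace Q hchar hetale hg⟩

/-- For a finite étale algebra l/k (char k ≠ 2) and a non-degenerate
quadratic space (W, q_l) over l, the transfer q_k = Tr^l_k ∘ q_l is a non-degenerate
quadratic form over k, every element of SO(q_l) is an isometry of q_k
(the embedding SO(q_l) ⊆ SO(q_k)), and the spinor norms satisfy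
sn_{q_k}(g) = N^l_k(sn_{q_l}(g)) modulo squares in k^×. -/
theorem stmt_8 {k l W : Type*} [Field k] (hchar : (2 : k) ≠ 0)
    [CommRing l] [Algebra k l] [Module.Finite k l]
    (hetale : (Algebra.traceForm k l).Nondegenerate)
    [AddCommGroup W] [Module l W] [Module k W] [IsScalarTower k l W]
    [Module.Finite l W]
    (ql : W → l)
    (hsmul : ∀ (c : l) (x : W), ql (c • x) = c ^ 2 * ql x)
    (hbil : ∀ x : W, IsLinearMap l fun y => QuadraticMap.polar ql x y)
    (hnd : ∀ x : W, (∀ y : W, QuadraticMap.polar ql x y = 0) → x = 0)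
    (g : W → W) (s : l) (hg : IsSpinorNormRep l ql g s) :
    (∀ x : W, Algebra.trace k l (ql (g x)) = Algebra.trace k l (ql x)) ∧
    (∀ x : W,
      (∀ y : W, QuadraticMap.polar (fun z => Algebra.trace k l (ql z)) x y = 0) → x = 0) ∧
    (∃ c : k, c ≠ 0 ∧
      IsSpinorNormRep k (fun z => Algebra.trace k l (ql z)) g
        (Algebra.norm k s * c ^ 2)) :=
  stmt_8_general hchar hetale ql hsmul hbil hnd g s hg
end

section
/- Let V be a quadratic space over ℚ_p with a self-dual ℤ_p-lattice Λ, and let v ∈ Λ be a primitive vector (v ∉ pΛ) with ord_p(q(v)) = d ≥ 1. Then there exists a primitive isotropic vector ṽ ∈ Λ with q(ṽ) = 0 and ṽ ≡ v mod p^d Λ. -/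
/-! Self-duality makes the pairing `Λ × Λ → ℤ_p` perfect, so a primitive `v` pairs to a unit
`b = ⟨v, l⟩` with some `l ∈ Λ`. Along the line `v - t l` the form is the quadratic polynomial
`q(l) t² - b t + q(v)`, whose constant term has valuation `d ≥ 1` and whose derivative at `0`
is the unit `-b`. Hensel's lemma gives a root `t` of valuation `≥ d`, and `v - t l` is the
required isotropic vector; it is primitive because it is congruent to `v` modulo `p`. -/

open QuadraticMap Polynomial

theorem QuadraticMap.map_sub_smul {R M : Type*} [CommRing R] [AddCommGroup M] [Module R M]
    (Q : QuadraticForm R M) (t : R) (x y : M) :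
    Q (x - t • y) = Q x - t * polar Q x y + t ^ 2 * Q y := by
  rw [sub_eq_add_neg, ← neg_smul, QuadraticMap.map_add (⇑Q), QuadraticMap.map_smul,
    polar_smul_right, smul_eq_mul, smul_eq_mul]
  ring

theorem Submodule.exists_eq_smul_of_sub_eq_pow_smul {R M : Type*} [CommRing R] [AddCommGroup M]
    [Module R M] {N : Submodule R M} {π : R} {v w : M} {d : ℕ} (hd : 1 ≤ d)
    (hw : ∃ u ∈ N, w = π • u) (hwv : ∃ u ∈ N, w - v = π ^ d • u) :
    ∃ u ∈ N, v = π • u := by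
  obtain ⟨u, hu, rfl⟩ := hw
  obtain ⟨u', hu', hwv⟩ := hwv
  obtain ⟨e, rfl⟩ := Nat.exists_eq_add_of_le' hd
  refine ⟨u - π ^ e • u', N.sub_mem hu (N.smul_mem _ hu'), ?_⟩
  rw [smul_sub, smul_smul, ← pow_succ', ← hwv]
  abel

namespace PadicInt

variable {p : ℕ} [Fact p.Prime]

theorem mem_range_algebraMap_iff {x : ℚ_[p]} :
    x ∈ Set.range (algebraMap ℤ_[p] ℚ_[p]) ↔ ‖x‖ ≤ 1 :=
  ⟨fun ⟨y, hy⟩ => hy ▸ y.norm_le_one, fun hx => ⟨⟨x, hx⟩, rfl⟩⟩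

theorem norm_le_norm_of_quadratic_root {a b c z : ℤ_[p]} (hb : ‖b‖ = 1) (hz : ‖z‖ < 1)
    (hroot : a * z ^ 2 - b * z + c = 0) : ‖z‖ ≤ ‖c‖ := by
  by_contra! hcz
  have hz_pos : 0 < ‖z‖ := (norm_nonneg c).trans_lt hcz
  have key : ‖z‖ ≤ max (‖z‖ ^ 2) ‖c‖ :=
    calc ‖z‖ = ‖b * z‖ := by rw [norm_mul, hb, one_mul]
      _ = ‖a * z ^ 2 + c‖ := by rw [show b * z = a * z ^ 2 + c by linear_combination -hroot]
      _ ≤ max ‖a * z ^ 2‖ ‖c‖ := nonarchimedean _ _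
      _ ≤ max (‖z‖ ^ 2) ‖c‖ := by
        gcongr
        rw [norm_mul, norm_pow]
        exact mul_le_of_le_one_left (by positivity) a.norm_le_one
  exact key.not_gt (max_lt (by nlinarith) hcz)

theorem exists_quadratic_root_norm_le {a b c : ℤ_[p]} (hb : ‖b‖ = 1) (hc : ‖c‖ < 1) :
    ∃ z : ℤ_[p], a * z ^ 2 - b * z + c = 0 ∧ ‖z‖ ≤ ‖c‖ := by
  set F : ℤ_[p][X] := C a * X ^ 2 - C b * X + C c
  have hF : F.aeval (0 : ℤ_[p]) = c := by simp [F]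
  have hF' : F.derivative.aeval (0 : ℤ_[p]) = -b := by simp [F]
  obtain ⟨z, hz_root, hz_dist, -⟩ :=
    hensels_lemma (F := F) (a := 0) (by rwa [hF, hF', norm_neg, hb, one_pow])
  rw [hF', norm_neg, hb, sub_zero] at hz_dist
  have hroot : a * z ^ 2 - b * z + c = 0 := by simpa [F] using hz_root
  exact ⟨z, hroot, norm_le_norm_of_quadratic_root hb hz_dist hroot⟩

end PadicInt

section SelfDualLattice

variable {p : ℕ} [Fact p.Prime] {V : Type*} [AddCommGroup V] [Module ℚ_[p] V] [Module ℤ_[p] V]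
  {Q : QuadraticForm ℚ_[p] V} {Λ : Submodule ℤ_[p] V}

theorem exists_isotropic_sub_smul [IsScalarTower ℤ_[p] ℚ_[p] V] {v l : V} (hl : ‖Q l‖ ≤ 1)
    (hb : ‖polar Q v l‖ = 1) (hc : ‖Q v‖ < 1) :
    ∃ z : ℤ_[p], Q (v - z • l) = 0 ∧ ‖z‖ ≤ ‖Q v‖ := by
  obtain ⟨z, hroot, hz⟩ := PadicInt.exists_quadratic_root_norm_le
    (a := ⟨Q l, hl⟩) (b := ⟨polar Q v l, hb.le⟩) (c := ⟨Q v, hc.le⟩) hb hc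
  refine ⟨z, ?_, hz⟩
  have hroot' : Q l * (z : ℚ_[p]) ^ 2 - polar Q v l * z + Q v = 0 :=
    congrArg ((↑) : ℤ_[p] → ℚ_[p]) hroot
  rw [← algebraMap_smul ℚ_[p] z l, PadicInt.algebraMap_apply, QuadraticMap.map_sub_smul]
  linear_combination hroot'

variable (hself : (Λ : Set V) = {w : V | ∀ l ∈ Λ,
  polar (⇑Q) w l ∈ Set.range (algebraMap ℤ_[p] ℚ_[p])})
include hself

theorem mem_iff_forall_norm_polar_le_one {w : V} : w ∈ Λ ↔ ∀ l ∈ Λ, ‖polar Q w l‖ ≤ 1 := by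
  rw [← SetLike.mem_coe, hself]
  exact forall₂_congr fun _ _ => PadicInt.mem_range_algebraMap_iff

theorem norm_apply_le_one_of_mem (hodd : p ≠ 2) {l : V} (hl : l ∈ Λ) : ‖Q l‖ ≤ 1 := by
  have h2 : ‖((2 : ℕ) : ℚ_[p])‖ = 1 :=
    Padic.norm_natCast_eq_one_iff.mpr ((Nat.coprime_primes Fact.out Nat.prime_two).mpr hodd)
  calc ‖Q l‖ = ‖polar Q l l‖ := by rw [polar_self, nsmul_eq_mul, norm_mul, h2, one_mul]
    _ ≤ 1 := (mem_iff_forall_norm_polar_le_one hself).mp hl l hl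

theorem exists_norm_polar_eq_one [IsScalarTower ℤ_[p] ℚ_[p] V] {v : V} (hv : v ∈ Λ)
    (hprim : ¬ ∃ u ∈ Λ, v = (p : ℤ_[p]) • u) : ∃ l ∈ Λ, ‖polar Q v l‖ = 1 := by
  -- Otherwise `p⁻¹ • v` still pairs integrally with `Λ`, hence lies in `Λ` by self-duality.
  by_contra! hlt
  have hp : (p : ℚ_[p]) ≠ 0 := Nat.cast_ne_zero.mpr (Fact.out : p.Prime).ne_zero
  refine hprim ⟨(p : ℚ_[p])⁻¹ • v, ?_, ?_⟩
  · refine (mem_iff_forall_norm_polar_le_one hself).mpr fun l hl => ?_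
    have hle : ‖polar Q v l‖ ≤ (p : ℝ) ^ (-1 : ℤ) :=
      (Padic.norm_le_pow_iff_norm_lt_pow_add_one _ _).mpr <| by
        simpa using ((mem_iff_forall_norm_polar_le_one hself).mp hv l hl).lt_of_ne (hlt l hl)
    rw [zpow_neg_one] at hle
    rw [polar_smul_left, smul_eq_mul, norm_mul, norm_inv, Padic.norm_p, inv_inv]
    have hp_pos : (0 : ℝ) < p := Nat.cast_pos.mpr (Fact.out : p.Prime).pos
    calc (p : ℝ) * ‖polar Q v l‖ ≤ p * (p : ℝ)⁻¹ := by gcongr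
      _ = 1 := mul_inv_cancel₀ hp_pos.ne'
  · rw [← algebraMap_smul ℚ_[p] (p : ℤ_[p]), map_natCast, smul_smul, mul_inv_cancel₀ hp,
      one_smul]

end SelfDualLattice

theorem stmt_10_general {p : ℕ} [Fact p.Prime] (hodd : p ≠ 2)
    {V : Type*} [AddCommGroup V] [Module ℚ_[p] V]
    [Module ℤ_[p] V] [IsScalarTower ℤ_[p] ℚ_[p] V]
    (Q : QuadraticForm ℚ_[p] V)
    (Λ : Submodule ℤ_[p] V)
    (hself : (Λ : Set V) = {w : V | ∀ l ∈ Λ,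
      QuadraticMap.polar (⇑Q) w l ∈ Set.range (algebraMap ℤ_[p] ℚ_[p])})
    (v : V) (hv : v ∈ Λ)
    (hprim : ¬ ∃ u ∈ Λ, v = (p : ℤ_[p]) • u)
    (d : ℕ) (hd : 1 ≤ d)
    (hQv : Q v ≠ 0) (hval : (Q v).valuation = (d : ℤ)) :
    ∃ w ∈ Λ, Q w = 0 ∧ (¬ ∃ u ∈ Λ, w = (p : ℤ_[p]) • u) ∧
      ∃ u ∈ Λ, w - v = ((p : ℤ_[p]) ^ d) • u := by
  obtain ⟨l, hl, hb⟩ := exists_norm_polar_eq_one hself hv hprim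
  have hQv_norm : ‖Q v‖ = (p : ℝ) ^ (-(d : ℤ)) := by
    rw [Padic.norm_eq_zpow_neg_valuation hQv, hval]
  have hQv_lt : ‖Q v‖ < 1 := hQv_norm ▸ zpow_lt_one_of_neg₀
    (Nat.one_lt_cast.mpr (Fact.out : p.Prime).one_lt) (by omega)
  obtain ⟨z, hiso, hz⟩ :=
    exists_isotropic_sub_smul (norm_apply_le_one_of_mem hself hodd hl) hb hQv_lt
  obtain ⟨z', rfl⟩ : (p : ℤ_[p]) ^ d ∣ z := by
    rw [← Ideal.mem_span_singleton, ← PadicInt.norm_le_pow_iff_mem_span_pow]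
    exact hz.trans hQv_norm.le
  have hcong : ∃ u ∈ Λ, v - ((p : ℤ_[p]) ^ d * z') • l - v = ((p : ℤ_[p]) ^ d) • u :=
    ⟨-(z' • l), Λ.neg_mem (Λ.smul_mem _ hl), by rw [mul_smul, smul_neg]; abel⟩
  exact ⟨_, Λ.sub_mem hv (Λ.smul_mem _ hl), hiso,
    fun hw => hprim (Submodule.exists_eq_smul_of_sub_eq_pow_smul hd hw hcong), hcong⟩

/-- If v is a primitive vector of a self-dual ℤ_p-lattice Λ with
ord_p(q(v)) = d ≥ 1, then there is a primitive isotropic vector ṽ ∈ Λ with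
ṽ ≡ v mod p^d Λ. -/
theorem stmt_10 {p : ℕ} [Fact p.Prime] (hodd : p ≠ 2)
    {V : Type*} [AddCommGroup V] [Module ℚ_[p] V] [FiniteDimensional ℚ_[p] V]
    [Module ℤ_[p] V] [IsScalarTower ℤ_[p] ℚ_[p] V]
    (Q : QuadraticForm ℚ_[p] V)
    (hnd : ∀ w : V, (∀ x : V, QuadraticMap.polar (⇑Q) w x = 0) → w = 0)
    (Λ : Submodule ℤ_[p] V) (hfg : Λ.FG)
    (hfull : Submodule.span ℚ_[p] (Λ : Set V) = ⊤)
    (hself : (Λ : Set V) = {w : V | ∀ l ∈ Λ,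
      QuadraticMap.polar (⇑Q) w l ∈ Set.range (algebraMap ℤ_[p] ℚ_[p])})
    (v : V) (hv : v ∈ Λ)
    (hprim : ¬ ∃ u ∈ Λ, v = (p : ℤ_[p]) • u)
    (d : ℕ) (hd : 1 ≤ d)
    (hQv : Q v ≠ 0) (hval : (Q v).valuation = (d : ℤ)) :
    ∃ w ∈ Λ, Q w = 0 ∧ (¬ ∃ u ∈ Λ, w = (p : ℤ_[p]) • u) ∧
      ∃ u ∈ Λ, w - v = ((p : ℤ_[p]) ^ d) • u :=
  stmt_10_general hodd Q Λ hself v hv hprim d hd hQv hval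
end
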